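/- Let λ, μ : ℤ → ℂ be arbitrary functions and let T be the operator on ℓ²(ℤ) with domain the finitely supported sequences D, defined by T e_n = λ(n) e_n + μ(n) e_{n+1} (equivalently (T u)_n = λ(n) u_n + μ(n−1) u_{n−1} for u ∈ D). Then the adjoint T* has domain Dom T* = { v ∈ ℓ²(ℤ) : the sequence ( conj(λ(n)) v_n + conj(μ(n)) v_{n+1} )_{n∈ℤ} lies in ℓ²(ℤ) } and acts there by (T* v)_n = conj(λ(n)) v_n + conj(μ(n)) v_{n+1}; that is, (λ(N) + Wμ(N)|_D)* = λ̄(N) ∔ μ̄(N)W*, the operator with maximal domain. -/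

import Mathlib

/-!
For `u` finitely supported, shifting the summation index in `⟪v, T u⟫` gives
`⟪v, T u⟫ = ∑ₙ conj (S v n) * u n` with `S v n = conj (λ n) * v n + conj (μ n) * v (n + 1)`.
Testing this against the basis vectors `e_n ∈ D` forces `(T* v) n = S v n`, so `S v ∈ ℓ²` on
`Dom T*`; conversely, whenever `S v ∈ ℓ²` it is itself a witness for `v ∈ Dom T*`.
-/

open scoped ComplexConjugate

section lp

variable {ι 𝕜 : Type*} [RCLike 𝕜] [DecidableEq ι]

theorem lp.finite_support_single {E : Type*} [NormedAddCommGroup E] (p : ENNReal) (i : ι) (a : E) :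
    (Function.support ⇑(lp.single (E := fun _ => E) p i a)).Finite :=
  (Set.finite_singleton i).subset
    (lp.coeFn_single (E := fun _ => E) p i a ▸ Pi.support_single_subset)

theorem lp.dense_of_single_mem {p : ENNReal} [Fact (1 ≤ p)] (hp : p ≠ ⊤)
    {V : Submodule 𝕜 (lp (fun _ : ι => 𝕜) p)} (h : ∀ i, lp.single p i (1 : 𝕜) ∈ V) :
    Dense (V : Set (lp (fun _ : ι => 𝕜) p)) := by
  intro f
  refine mem_closure_of_tendsto (lp.hasSum_single hp f) (.of_forall fun s => ?_)
  refine sum_mem fun i _ => ?_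
  simpa [← lp.single_smul] using V.smul_mem (f i) (h i)

theorem LinearPMap.adjoint_of_inner_eq_tsum
    (T : lp (fun _ : ι => 𝕜) 2 →ₗ.[𝕜] lp (fun _ : ι => 𝕜) 2)
    (hsingle : ∀ i, lp.single 2 i (1 : 𝕜) ∈ T.domain) (S : lp (fun _ : ι => 𝕜) 2 → ι → 𝕜)
    (hS : ∀ v (u : T.domain),
      inner 𝕜 v (T u) = ∑' i, conj (S v i) * (u : lp (fun _ : ι => 𝕜) 2) i) :
    (∀ v, v ∈ T.adjoint.domain ↔ Memℓp (S v) 2) ∧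
      ∀ v : T.adjoint.domain, ⇑(T.adjoint v) = S v := by
  have happly : ∀ v : T.adjoint.domain, ⇑(T.adjoint v) = S v := by
    intro v
    funext i
    have h := T.adjoint_isFormalAdjoint (lp.dense_of_single_mem ENNReal.ofNat_ne_top hsingle) v
      ⟨_, hsingle i⟩
    rw [hS, lp.inner_single_right, tsum_eq_single i] at h
    · exact star_injective (by simpa [RCLike.inner_apply] using h)
    · intro j hj
      simp [hj]
  refine ⟨fun v => ⟨fun hv => ?_, fun hv => ?_⟩, happly⟩
  · simpa [happly ⟨v, hv⟩] using lp.memℓp (T.adjoint ⟨v, hv⟩)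
  · refine T.mem_adjoint_domain_of_exists v ⟨⟨S v, hv⟩, fun u => ?_⟩
    rw [hS, lp.inner_eq_tsum]
    exact tsum_congr fun i => by rw [RCLike.inner_apply, mul_comm]

end lp

theorem tsum_conj_mul_diagonal_add_shift {𝕜 : Type*} [RCLike 𝕜] (lam mu V U : ℤ → 𝕜)
    (hU : (Function.support U).Finite) :
    ∑' n, conj (V n) * (lam n * U n + mu (n - 1) * U (n - 1))
      = ∑' n, conj (conj (lam n) * V n + conj (mu n) * V (n + 1)) * U n := by
  have hsum : ∀ W : ℤ → 𝕜, Summable fun n => W n * U n := fun W =>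
    summable_of_hasFiniteSupport (hU.subset (Function.support_mul_subset_right W U))
  calc ∑' n, conj (V n) * (lam n * U n + mu (n - 1) * U (n - 1))
      = ∑' n, conj (V n) * lam n * U n
          + ∑' n, conj (V (n - 1 + 1)) * mu (n - 1) * U (n - 1) := by
        rw [← Summable.tsum_add (hsum _)]
        · exact tsum_congr fun n => by simp only [sub_add_cancel]; ring
        · exact (Equiv.subRight (1 : ℤ)).summable_iff (f := fun n => conj (V (n + 1)) * mu n * U n)
            |>.mpr (hsum fun n => conj (V (n + 1)) * mu n)
    _ = ∑' n, conj (V n) * lam n * U n + ∑' n, conj (V (n + 1)) * mu n * U n := by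
        congr 1
        exact (Equiv.subRight 1).tsum_eq fun n => conj (V (n + 1)) * mu n * U n
    _ = ∑' n, conj (conj (lam n) * V n + conj (mu n) * V (n + 1)) * U n := by
        rw [← Summable.tsum_add (hsum _) (hsum _)]
        exact tsum_congr fun n => by simp only [map_add, map_mul, RCLike.conj_conj]; ring

theorem adjoint_of_diagonal_plus_shift
    (lam mu : ℤ → ℂ)
    (T : lp (fun _ : ℤ => ℂ) 2 →ₗ.[ℂ] lp (fun _ : ℤ => ℂ) 2)
    (hdom : ∀ x : lp (fun _ : ℤ => ℂ) 2,
      x ∈ T.domain ↔ (Function.support (x : ℤ → ℂ)).Finite)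
    (hT : ∀ (u : T.domain) (n : ℤ),
      (T u : ℤ → ℂ) n = lam n * (u : lp (fun _ : ℤ => ℂ) 2) n
        + mu (n - 1) * (u : lp (fun _ : ℤ => ℂ) 2) (n - 1)) :
    (∀ v : lp (fun _ : ℤ => ℂ) 2,
        v ∈ T.adjoint.domain ↔
          Memℓp (fun n : ℤ =>
            (starRingEnd ℂ) (lam n) * v n + (starRingEnd ℂ) (mu n) * v (n + 1)) 2) ∧
      ∀ (v : T.adjoint.domain) (n : ℤ),
        (T.adjoint v : ℤ → ℂ) n
          = (starRingEnd ℂ) (lam n) * (v : lp (fun _ : ℤ => ℂ) 2) n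
            + (starRingEnd ℂ) (mu n) * (v : lp (fun _ : ℤ => ℂ) 2) (n + 1) := by
  have hsingle (n : ℤ) : lp.single 2 n (1 : ℂ) ∈ T.domain :=
    (hdom _).mpr (lp.finite_support_single 2 n 1)
  obtain ⟨hdomain, happly⟩ := T.adjoint_of_inner_eq_tsum hsingle
    (fun v n => conj (lam n) * v n + conj (mu n) * v (n + 1)) fun v u => by
      rw [lp.inner_eq_tsum, ← tsum_conj_mul_diagonal_add_shift lam mu v u ((hdom u).mp u.2)]
      exact tsum_congr fun n => by rw [RCLike.inner_apply, hT, mul_comm]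
  exact ⟨hdomain, fun v n => congrFun (happly v) n⟩
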